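/- arXiv:1908.00783 — 7 statements merged into one kernel-verified Lean document; each statement's English description precedes it below -/
import Mathlib

section
/- Let a > b > 0 and consider the triangle with vertices g, e, k where |ge|² = (a²+b²)(a²-b²)²/(a²b²), |gk| = (a-b)(b+2a)/(2b), |ek| = (a-b)(a+2b)/(2a). Then the angle α' at vertex g satisfies cos(α') = (2a² + ab + b²)/((b + 2a)√(a² + b²)). -/
/-!
For `0 < b < a` the square root defining `ge` evaluates to `(a² - b²)√(a² + b²) / (ab)`.
Once `√(a² + b²)²` is replaced by `a² + b²`, both `ge² + gk² - ek²` and `2 ge gk` turn out to be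
multiples of `(a + b)(a - b)² / (ab²)`, by the factors `2a² + ab + b²` and `(b + 2a)√(a² + b²)`,
so their quotient is the claimed cosine.
-/

open Real

theorem sqrt_mul_sq_div_sq (x y z : ℝ) : √(y * x ^ 2 / z ^ 2) = √y * |x| / |z| := by
  rw [sqrt_div' _ (sq_nonneg z), sqrt_mul' _ (sq_nonneg x), sqrt_sq_eq_abs, sqrt_sq_eq_abs]

theorem honey_cos_eq {a b s ge gk ek : ℝ} (ha : a ≠ 0) (hb : b ≠ 0) (hab : a - b ≠ 0)
    (hab' : a + b ≠ 0) (hb2a : b + 2 * a ≠ 0) (hs0 : s ≠ 0) (hs : s ^ 2 = a ^ 2 + b ^ 2)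
    (hge : ge = (a ^ 2 - b ^ 2) * s / (a * b))
    (hgk : gk = (a - b) * (b + 2 * a) / (2 * b))
    (hek : ek = (a - b) * (a + 2 * b) / (2 * a)) :
    (ge ^ 2 + gk ^ 2 - ek ^ 2) / (2 * ge * gk) =
      (2 * a ^ 2 + a * b + b ^ 2) / ((b + 2 * a) * s) := by
  have hnum : ge ^ 2 + gk ^ 2 - ek ^ 2 =
      (a + b) * (a - b) ^ 2 * (2 * a ^ 2 + a * b + b ^ 2) / (a * b ^ 2) := by
    subst hge hgk hek
    field_simp
    linear_combination (4 * (a ^ 2 - b ^ 2) ^ 2) * hs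
  have hden : 2 * ge * gk = (a + b) * (a - b) ^ 2 * ((b + 2 * a) * s) / (a * b ^ 2) := by
    subst hge hgk
    field_simp
    ring
  rw [hnum, hden]
  field_simp

theorem stmt_4 (a b : ℝ) (hb : 0 < b) (hab : b < a)
    (ge gk ek : ℝ)
    (hge : ge = Real.sqrt ((a^2 + b^2) * (a^2 - b^2)^2 / (a^2 * b^2)))
    (hgk : gk = (a - b) * (b + 2*a) / (2*b))
    (hek : ek = (a - b) * (a + 2*b) / (2*a)) :
    (ge^2 + gk^2 - ek^2) / (2 * ge * gk) =
      (2*a^2 + a*b + b^2) / ((b + 2*a) * Real.sqrt (a^2 + b^2)) := by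
  have ha : 0 < a := hb.trans hab
  have hge' : ge = (a ^ 2 - b ^ 2) * √(a ^ 2 + b ^ 2) / (a * b) := by
    rw [hge, ← mul_pow, sqrt_mul_sq_div_sq, abs_of_pos (by nlinarith), abs_of_pos (by positivity)]
    ring
  exact honey_cos_eq ha.ne' hb.ne' (by linarith) (by linarith) (by linarith)
    (sqrt_pos.mpr (by positivity)).ne' (sq_sqrt (by positivity)) hge' hgk hek
end

section
/- For a > b > 0, let sin(θ) = b/√(a²+b²), cos(θ) = a/√(a²+b²), cos(α') = (2a² + ab + b²)/((b+2a)√(a²+b²)), sin(α') = (b/(2a+b))√(2ab/(a²+b²)). Then sin(θ)cos(α') - cos(θ)sin(α') = (b/(2a+b))·(2a + b + √(2ab))/(a + b + √(2ab)). -/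
/-! Writing `s = √(a² + b²)` and `r = √(2ab)`, the left side is `b/(2a+b) · (2a² + ab + b² - a r)/s²`,
and the remaining quotient equals `(2a + b + r)/(a + b + r)` because `r² = 2ab`. -/

lemma div_eq_div_of_sq_eq_two_mul {a b r : ℝ} (hr : r ^ 2 = 2 * a * b)
    (hab : a ^ 2 + b ^ 2 ≠ 0) (habr : a + b + r ≠ 0) :
    (2 * a ^ 2 + a * b + b ^ 2 - a * r) / (a ^ 2 + b ^ 2) = (2 * a + b + r) / (a + b + r) := by
  rw [div_eq_div_iff hab habr]
  linear_combination (-a) * hr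

theorem stmt_8 (a b : ℝ) (hb : 0 < b) (hab : b < a) :
    (b / Real.sqrt (a^2 + b^2)) *
        ((2*a^2 + a*b + b^2) / ((b + 2*a) * Real.sqrt (a^2 + b^2))) -
      (a / Real.sqrt (a^2 + b^2)) *
        ((b / (2*a + b)) * Real.sqrt (2*a*b / (a^2 + b^2))) =
    (b / (2*a + b)) * (2*a + b + Real.sqrt (2*a*b)) / (a + b + Real.sqrt (2*a*b)) := by
  have ha : 0 < a := hb.trans hab
  have hs2 : 0 < a ^ 2 + b ^ 2 := by positivity
  have hr2 : 0 < 2 * a * b := by positivity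
  have hss : Real.sqrt (a ^ 2 + b ^ 2) ^ 2 = a ^ 2 + b ^ 2 := Real.sq_sqrt hs2.le
  rw [Real.sqrt_div hr2.le, mul_div_assoc (b / (2 * a + b)),
    ← div_eq_div_of_sq_eq_two_mul (Real.sq_sqrt hr2.le) hs2.ne' (by positivity)]
  field_simp
  rw [hss]
  ring
end

section
/- For a > b > 0, in the triangle (g,e,k) with |gk| = (a-b)(b+2a)/(2b), |ek| = (a-b)(a+2b)/(2a), and sin(α') = (b/(2a+b))√(2ab/(a²+b²)), the law of sines gives sin(α) = (|gk|/|ek|)·sin(α') = (a/(a+2b))·√(2ab/(a²+b²)). -/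
/-! The common factor `a - b` of the two sides cancels, and the factor `2a + b` of `|gk|`
cancels against the denominator of `sin α'`. -/

lemma side_ratio_mul_sin {a b : ℝ} (hab : a ≠ b) (hb : b ≠ 0) (h2ab : 2*a + b ≠ 0) :
    ((a - b) * (b + 2*a) / (2*b)) / ((a - b) * (a + 2*b) / (2*a)) * (b / (2*a + b)) =
      a / (a + 2*b) := by
  rw [add_comm b]
  field_simp
  rw [mul_comm (a * 2 + b), mul_div_mul_right _ _ (by rwa [mul_comm])]

theorem stmt_9 (a b : ℝ) (hb : 0 < b) (hab : b < a) :
    ((a - b) * (b + 2*a) / (2*b)) / ((a - b) * (a + 2*b) / (2*a)) *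
        ((b / (2*a + b)) * Real.sqrt (2*a*b / (a^2 + b^2))) =
      (a / (a + 2*b)) * Real.sqrt (2*a*b / (a^2 + b^2)) := by
  rw [← mul_assoc, side_ratio_mul_sin hab.ne' hb.ne' (by linarith)]
end

section
/- For a > b > 0, the law of sines in the triangle (g,e,k) gives sin(β) = (|ge|/|ek|)·sin(α') = 2(a + b)√(2ab)/((a + 2b)(2a + b)), where |ge| = (a² - b²)√(a² + b²)/(ab), |ek| = (a-b)(a+2b)/(2a), and sin(α') = (b/(2a+b))√(2ab/(a²+b²)). -/
theorem stmt_11 (a b : ℝ) (hb : 0 < b) (hab : b < a) :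
    ((a^2 - b^2) * Real.sqrt (a^2 + b^2) / (a*b)) / ((a - b) * (a + 2*b) / (2*a)) *
        ((b / (2*a + b)) * Real.sqrt (2*a*b / (a^2 + b^2))) =
      2 * (a + b) * Real.sqrt (2*a*b) / ((a + 2*b) * (2*a + b)) := by
  have ha : 0 < a := hb.trans hab
  have hab' : a - b ≠ 0 := sub_ne_zero.mpr hab.ne'
  have side_ratio :
      ((a^2 - b^2) * Real.sqrt (a^2 + b^2) / (a*b)) / ((a - b) * (a + 2*b) / (2*a)) =
        2 * (a + b) * Real.sqrt (a^2 + b^2) / (b * (a + 2*b)) := by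
    field_simp
    ring
  have hsqrt : Real.sqrt (a^2 + b^2) ≠ 0 := by positivity
  rw [side_ratio, Real.sqrt_div (by positivity)]
  field_simp
end

section
/- 2·arcsin((4-√2)/6) + arcsin(4√2/9) = π/2. -/
open Real

theorem stmt_16 :
    2 * Real.arcsin ((4 - Real.sqrt 2) / 6) + Real.arcsin (4 * Real.sqrt 2 / 9) = π / 2 := by
  have h2 : (0:ℝ) ≤ Real.sqrt 2 := Real.sqrt_nonneg 2
  have hs : Real.sqrt 2 ^ 2 = 2 := Real.sq_sqrt (by norm_num)
  have hs2 : Real.sqrt 2 < 3/2 := by nlinarith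
  have hs1 : 1 < Real.sqrt 2 := by nlinarith
  set x : ℝ := (4 - Real.sqrt 2) / 6 with hxdef
  have hx0 : 0 ≤ x := by unfold x; nlinarith
  have ha0 : 0 ≤ Real.arcsin x := Real.arcsin_nonneg.2 hx0
  have ha4 : Real.arcsin x < π / 4 := by
    rw [← not_le, Real.pi_div_four_le_arcsin]
    push_neg
    unfold x
    nlinarith
  have hsin : Real.sin (Real.arcsin x) = x := by
    apply Real.sin_arcsin
    · unfold x; nlinarith
    · unfold x; nlinarith
  have key : Real.arcsin (4 * Real.sqrt 2 / 9) = π / 2 - 2 * Real.arcsin x := by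
    have h1 : 4 * Real.sqrt 2 / 9 = Real.sin (π / 2 - 2 * Real.arcsin x) := by
      rw [Real.sin_pi_div_two_sub, Real.cos_two_mul, Real.cos_sq', hsin]
      unfold x
      nlinarith
    rw [h1, Real.arcsin_sin (by linarith) (by linarith)]
  rw [key]; ring
end

section
/- Define the oval perimeter O(a,b) = 4[γ·(a²/b) + β·(a+b)/2 + δ·(b²/a)], where γ = arcsin((b/(2a+b))·(2a+b+√(2ab))/(a+b+√(2ab))), β = arcsin(2(a+b)√(2ab)/((a+2b)(2a+b))), δ = arcsin((a/(a+2b))·(a+2b+√(2ab))/(a+b+√(2ab))). Then for a = b = ρ > 0, O(ρ,ρ) = 2πρ. -/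
/-!
At `a = b = ρ` we have `√(2ab) = √2 ρ`, all three radii equal `ρ`, and the outer arcs have the
same sine `g = (4 - √2)/6`, while the middle one has sine `4√2/9 = 1 - 2 g²`. Hence
`β = π/2 - 2γ` and each quarter `γ + β + δ` is a right angle.
-/

open Real

noncomputable def ovalPerimeter (a b : ℝ) : ℝ :=
  4 * (Real.arcsin ((b / (2*a + b)) * (2*a + b + Real.sqrt (2*a*b)) /
          (a + b + Real.sqrt (2*a*b))) * (a^2 / b) +
       Real.arcsin (2 * (a + b) * Real.sqrt (2*a*b) / ((a + 2*b) * (2*a + b))) *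
          ((a + b) / 2) +
       Real.arcsin ((a / (a + 2*b)) * (a + 2*b + Real.sqrt (2*a*b)) /
          (a + b + Real.sqrt (2*a*b))) * (b^2 / a))

theorem Real.arcsin_one_sub_two_mul_sq {x : ℝ} (hx₀ : 0 ≤ x) (hx₁ : x ≤ 1) :
    arcsin (1 - 2 * x ^ 2) = π / 2 - 2 * arcsin x := by
  have h₀ : 0 ≤ arcsin x := arcsin_nonneg.2 hx₀
  have h₁ : arcsin x ≤ π / 2 := arcsin_le_pi_div_two x
  apply arcsin_eq_of_sin_eq
  · rw [sin_pi_div_two_sub, cos_two_mul_eq_one_sub, sin_arcsin (by linarith) hx₁]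
  · constructor <;> linarith

theorem sqrt_two_mul_self {ρ : ℝ} (hρ : 0 ≤ ρ) : √(2 * ρ * ρ) = √2 * ρ := by
  rw [mul_assoc, sqrt_mul zero_le_two, sqrt_mul_self hρ]

section Circle

variable {ρ : ℝ} (hρ : 0 < ρ)
include hρ

theorem ovalPerimeter_self_outer_sine :
    (ρ / (2*ρ + ρ)) * (2*ρ + ρ + √(2*ρ*ρ)) / (ρ + ρ + √(2*ρ*ρ)) = (4 - √2) / 6 := by
  rw [sqrt_two_mul_self hρ.le]
  have hs : √2 ^ 2 = 2 := sq_sqrt zero_le_two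
  field_simp
  linear_combination 3 * hs

theorem ovalPerimeter_self_inner_sine :
    (ρ / (ρ + 2*ρ)) * (ρ + 2*ρ + √(2*ρ*ρ)) / (ρ + ρ + √(2*ρ*ρ)) = (4 - √2) / 6 := by
  rw [show ρ + 2*ρ = 2*ρ + ρ by ring]
  exact ovalPerimeter_self_outer_sine hρ

theorem ovalPerimeter_self_middle_sine :
    2 * (ρ + ρ) * √(2*ρ*ρ) / ((ρ + 2*ρ) * (2*ρ + ρ)) = 1 - 2 * ((4 - √2) / 6) ^ 2 := by
  rw [sqrt_two_mul_self hρ.le]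
  have hs : √2 ^ 2 = 2 := sq_sqrt zero_le_two
  field_simp
  linear_combination 18 * hs

end Circle

theorem stmt_18 (ρ : ℝ) (hρ : 0 < ρ) : ovalPerimeter ρ ρ = 2 * π * ρ := by
  have hs : √2 ^ 2 = 2 := sq_sqrt zero_le_two
  have hs₁ : 1 < √2 := by nlinarith [sqrt_nonneg 2]
  have hs₂ : √2 < 2 := by nlinarith [sqrt_nonneg 2]
  rw [ovalPerimeter, ovalPerimeter_self_outer_sine hρ, ovalPerimeter_self_middle_sine hρ,
    ovalPerimeter_self_inner_sine hρ, arcsin_one_sub_two_mul_sq (by linarith) (by linarith)]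
  field_simp
  ring
end

section
/- For a > b > 0, the three central angles of the quarter oval sum to a right angle: arcsin(sin γ) + arcsin(sin β) + arcsin(sin δ) = π/2, where sin γ = (b/(2a+b))·(2a+b+√(2ab))/(a+b+√(2ab)), sin β = 2(a+b)√(2ab)/((a+2b)(2a+b)), sin δ = (a/(a+2b))·(a+2b+√(2ab))/(a+b+√(2ab)). -/
/-!
With `sin γ, sin β ∈ [0, 1]` we have `γ + β ∈ [0, π]`, so `γ + β = arccos (sin δ) = π / 2 - δ`
follows from `cos (γ + β) = sin δ`, i.e. from
`√(1 - sin²γ) √(1 - sin²β) - sin γ sin β = sin δ`. After the substitution `a = p² / 2`, `b = q²`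
the radical `√(2ab)` becomes `pq`, and the squared form of this identity is an identity of
rational functions in `p` and `q`.
-/

open Real

namespace Real

theorem arcsin_add_arcsin_eq_arccos {x y : ℝ} (hx₀ : 0 ≤ x) (hx₁ : x ≤ 1) (hy₀ : 0 ≤ y)
    (hy₁ : y ≤ 1) : arcsin x + arcsin y = arccos (√(1 - x ^ 2) * √(1 - y ^ 2) - x * y) := by
  have hcos : cos (arcsin x + arcsin y) = √(1 - x ^ 2) * √(1 - y ^ 2) - x * y := by
    rw [cos_add, cos_arcsin, cos_arcsin, sin_arcsin (by linarith) hx₁,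
      sin_arcsin (by linarith) hy₁]
  rw [← hcos, arccos_cos (add_nonneg (arcsin_nonneg.2 hx₀) (arcsin_nonneg.2 hy₀))]
  linarith [arcsin_le_pi_div_two x, arcsin_le_pi_div_two y]

theorem arcsin_add_arcsin_add_arcsin_eq_pi_div_two {x y z : ℝ} (hx₀ : 0 ≤ x) (hx₁ : x ≤ 1)
    (hy₀ : 0 ≤ y) (hy₁ : y ≤ 1) (hz₀ : 0 ≤ z) (h : (1 - x ^ 2) * (1 - y ^ 2) = (z + x * y) ^ 2) :
    arcsin x + arcsin y + arcsin z = π / 2 := by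
  have hz : √(1 - x ^ 2) * √(1 - y ^ 2) - x * y = z := by
    rw [← sqrt_mul (by nlinarith), h, sqrt_sq (by positivity)]
    ring
  rw [arcsin_add_arcsin_eq_arccos hx₀ hx₁ hy₀ hy₁, hz, arccos_eq_pi_div_two_sub_arcsin]
  ring

end Real

namespace EightCenteredOval

noncomputable def sinGamma (a b : ℝ) : ℝ :=
  (b / (2*a + b)) * (2*a + b + √(2*a*b)) / (a + b + √(2*a*b))

noncomputable def sinBeta (a b : ℝ) : ℝ :=
  2 * (a + b) * √(2*a*b) / ((a + 2*b) * (2*a + b))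

noncomputable def sinDelta (a b : ℝ) : ℝ :=
  (a / (a + 2*b)) * (a + 2*b + √(2*a*b)) / (a + b + √(2*a*b))

variable {a b : ℝ}

theorem sinGamma_nonneg (ha : 0 < a) (hb : 0 < b) : 0 ≤ sinGamma a b := by
  unfold sinGamma; positivity

theorem sinBeta_nonneg (ha : 0 < a) (hb : 0 < b) : 0 ≤ sinBeta a b := by
  unfold sinBeta; positivity

theorem sinDelta_nonneg (ha : 0 < a) (hb : 0 < b) : 0 ≤ sinDelta a b := by
  unfold sinDelta; positivity

theorem sinGamma_le_one (ha : 0 < a) (hb : 0 < b) : sinGamma a b ≤ 1 := by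
  have hs := sqrt_nonneg (2*a*b)
  rw [sinGamma, div_le_one (by positivity), div_mul_eq_mul_div, div_le_iff₀ (by positivity)]
  nlinarith [mul_nonneg ha.le hs]

theorem sinBeta_le_one (ha : 0 < a) (hb : 0 < b) : sinBeta a b ≤ 1 := by
  have hs := sqrt_nonneg (2*a*b)
  have hs2 : √(2*a*b) ^ 2 = 2*a*b := sq_sqrt (by positivity)
  rw [sinBeta, div_le_one (by positivity)]
  nlinarith [sq_nonneg (√(2*a*b) - (a + b)), sq_nonneg (a - b), mul_pos ha hb]

theorem one_sub_sinGamma_sq_mul_one_sub_sinBeta_sq (ha : 0 < a) (hb : 0 < b) :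
    (1 - sinGamma a b ^ 2) * (1 - sinBeta a b ^ 2) =
      (sinDelta a b + sinGamma a b * sinBeta a b) ^ 2 := by
  obtain ⟨p, hp, rfl⟩ : ∃ p : ℝ, 0 < p ∧ p ^ 2 / 2 = a :=
    ⟨√(2*a), by positivity, by rw [sq_sqrt (by positivity)]; ring⟩
  obtain ⟨q, hq, rfl⟩ : ∃ q : ℝ, 0 < q ∧ q ^ 2 = b := ⟨√b, by positivity, sq_sqrt hb.le⟩
  have hs : √(2 * (p ^ 2 / 2) * q ^ 2) = p * q := by
    rw [show 2 * (p ^ 2 / 2) * q ^ 2 = (p * q) ^ 2 by ring, sqrt_sq (by positivity)]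
  simp only [sinGamma, sinBeta, sinDelta, hs]
  field_simp
  ring

end EightCenteredOval

open EightCenteredOval in
theorem stmt_19 (a b : ℝ) (hb : 0 < b) (hab : b < a) :
    Real.arcsin ((b / (2*a + b)) * (2*a + b + Real.sqrt (2*a*b)) /
        (a + b + Real.sqrt (2*a*b))) +
      Real.arcsin (2 * (a + b) * Real.sqrt (2*a*b) / ((a + 2*b) * (2*a + b))) +
      Real.arcsin ((a / (a + 2*b)) * (a + 2*b + Real.sqrt (2*a*b)) /
        (a + b + Real.sqrt (2*a*b))) = π / 2 := by
  have ha : 0 < a := hb.trans hab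
  exact arcsin_add_arcsin_add_arcsin_eq_pi_div_two (sinGamma_nonneg ha hb) (sinGamma_le_one ha hb)
    (sinBeta_nonneg ha hb) (sinBeta_le_one ha hb) (sinDelta_nonneg ha hb)
    (one_sub_sinGamma_sq_mul_one_sub_sinBeta_sq ha hb)
end
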